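/- arXiv:1605.03493 — 2 statements merged into one kernel-verified Lean document; each statement's English description precedes it below -/
import Mathlib

section
/- Let (J,Γ) be a standard pair, let x ∈ Ω_J(1) be such that ν_x is dominant with ⟨ν_x, α^∨⟩ = 0 for α ∈ R_J and ⟨ν_x, α^∨⟩ > 0 for all α ∈ R⁺ ∖ R_J, and let u ∈ W_Γ(1). Then for all sufficiently large n, ℓ(u x^{n+n₀}) = ℓ(u xⁿ) + ℓ(x^{n₀}), where n₀ = #W₀. -/
open scoped Classical

noncomputable section

/-- the group structure on `AddAut A` (composition), as in the older Mathlib (`AddAut.group`) -/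
instance AddAut.group (A : Type*) [Add A] : Group (AddAut A) where
  mul g h := AddEquiv.trans h g
  one := AddEquiv.refl _
  inv := AddEquiv.symm
  mul_assoc _ _ _ := rfl
  one_mul _ := rfl
  mul_one _ := rfl
  inv_mul_cancel := AddEquiv.self_trans_symm

/-- A based root datum `(X, R, Y, R^∨, F₀)`: free abelian groups `X`, `Y` of finite rank
in perfect pairing, a finite set of roots `R ⊆ X` with coroots in `Y`, a set of
simple roots `F₀` and the corresponding positive roots `R⁺`. -/
structure BasedRootDatum where
  /-- the character lattice `X` -/
  X : Type
  [addX : AddCommGroup X]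
  [freeX : Module.Free ℤ X]
  [finX : Module.Finite ℤ X]
  /-- the cocharacter lattice `Y` -/
  Y : Type
  [addY : AddCommGroup Y]
  [freeY : Module.Free ℤ Y]
  [finY : Module.Finite ℤ Y]
  /-- the perfect pairing `⟨ , ⟩ : X × Y → ℤ` -/
  pairing : X →+ Y →+ ℤ
  pairing_inj_left : ∀ x x' : X, (∀ y : Y, pairing x y = pairing x' y) → x = x'
  pairing_inj_right : ∀ y y' : Y, (∀ x : X, pairing x y = pairing x y') → y = y'
  /-- the set of roots `R ⊆ X` -/
  R : Set X
  R_fin : R.Finite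
  /-- the coroot `α ↦ α^∨` -/
  coroot : X → Y
  root_coroot_two : ∀ α ∈ R, pairing α (coroot α) = 2
  neg_mem : ∀ α ∈ R, -α ∈ R
  refl_mem : ∀ α ∈ R, ∀ β ∈ R, β - pairing β (coroot α) • α ∈ R
  /-- the set of simple roots `F₀` -/
  F0 : Set X
  F0_sub : F0 ⊆ R
  /-- the set of positive roots `R⁺` -/
  Rplus : Set X
  Rplus_sub : Rplus ⊆ R
  Rplus_partition : ∀ α ∈ R, (α ∈ Rplus ↔ ¬(-α ∈ Rplus))
  Rplus_closure : ∀ α ∈ R, (α ∈ Rplus ↔ α ∈ AddSubmonoid.closure F0)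

namespace BasedRootDatum

attribute [instance] BasedRootDatum.addX BasedRootDatum.freeX BasedRootDatum.finX
  BasedRootDatum.addY BasedRootDatum.freeY BasedRootDatum.finY

variable (D : BasedRootDatum)

/-- `f` is the reflection `s_α` for the root `α`. -/
def IsReflOf (α : D.X) (f : AddAut D.X) : Prop :=
  ∀ x : D.X, f x = x - D.pairing x (D.coroot α) • α

/-- the finite Weyl group `W₀`, generated by the reflections `s_α`, `α ∈ R` -/
def W0 : Subgroup (AddAut D.X) :=
  Subgroup.closure {f | ∃ α ∈ D.R, D.IsReflOf α f}

/-- the action of `W₀` on the (multiplicative) lattice `X` -/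
def φ : D.W0 →* MulAut (Multiplicative D.X) :=
  { toFun := fun u => AddEquiv.toMultiplicative (u : AddAut D.X)
    map_one' := rfl
    map_mul' := fun _ _ => rfl }

/-- the extended affine Weyl group `W̃ = X ⋊ W₀` -/
abbrev Wt := Multiplicative D.X ⋊[D.φ] D.W0

/-- the translation element `t^λ ∈ W̃` for `λ ∈ X` -/
def trans (lam : D.X) : D.Wt := SemidirectProduct.inl (Multiplicative.ofAdd lam)

/-- the `W₀`-component of `w̃ ∈ W̃` acting on `X` -/
def wact (w : D.Wt) (x : D.X) : D.X := (w.right : AddAut D.X) x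

/-- the translation part of `w̃ ∈ W̃` -/
def tpart (w : D.Wt) : D.X := Multiplicative.toAdd w.left

/-- `(α, k)` is a positive affine root -/
def posAff (a : D.X × ℤ) : Prop :=
  a.1 ∈ D.R ∧ (0 < a.2 ∨ (a.2 = 0 ∧ a.1 ∈ D.Rplus))

/-- the action of `W̃` on affine roots: `(t^λ u)(α, k) = (uα, k - ⟨λ, (uα)^∨⟩)` -/
def affAct (w : D.Wt) (a : D.X × ℤ) : D.X × ℤ :=
  (D.wact w a.1, a.2 - D.pairing (D.tpart w) (D.coroot (D.wact w a.1)))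

/-- the length function on `W̃`: the number of positive affine roots made negative,
equivalently the number of hyperplanes separating `C₀` from `w̃ C₀` -/
def lenT (w : D.Wt) : ℕ :=
  Set.ncard {a : D.X × ℤ | D.posAff a ∧ ¬ D.posAff (D.affAct w a)}

/-- the affine Weyl group `W_aff = ℤR ⋊ W₀ ⊆ W̃`, generated by the affine reflections -/
def Waff : Subgroup D.Wt :=
  Subgroup.closure {w | ∃ α ∈ D.R, ∃ k : ℤ, ∃ u : D.W0,
    D.IsReflOf α (u : AddAut D.X) ∧ w = D.trans (k • α) * SemidirectProduct.inr u}

/-- the set `S_aff` of simple reflections of `W_aff`: the length one elements -/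
def Saff : Set D.Wt := {w | w ∈ D.Waff ∧ D.lenT w = 1}

/-- the length zero subset `Ω ⊆ W̃` -/
def isOmega (w : D.Wt) : Prop := D.lenT w = 0

/-- For `J ⊆ F₀`: the roots `R_J` spanned by `J` -/
def RJ (J : Set D.X) : Set D.X := D.R ∩ (AddSubgroup.closure J : Set D.X)

/-- For `J ⊆ F₀`: the parabolic subgroup `W_J ⊆ W₀` -/
def WJ0 (J : Set D.X) : Subgroup (AddAut D.X) :=
  Subgroup.closure {f | ∃ α ∈ J, D.IsReflOf α f}

/-- membership in `W̃_J = X ⋊ W_J` -/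
def inWtJ (J : Set D.X) (w : D.Wt) : Prop := (w.right : AddAut D.X) ∈ D.WJ0 J

/-- `(α, k)` is a positive affine root of `W̃_J` -/
def posAffJ (J : Set D.X) (a : D.X × ℤ) : Prop :=
  a.1 ∈ D.RJ J ∧ (0 < a.2 ∨ (a.2 = 0 ∧ a.1 ∈ D.Rplus))

/-- the length function `ℓ_J` on `W̃_J` -/
def lenJ (J : Set D.X) (w : D.Wt) : ℕ :=
  Set.ncard {a : D.X × ℤ | D.posAffJ J a ∧ ¬ D.posAffJ J (D.affAct w a)}

/-- the affine Weyl group `(W_J)_aff = ℤR_J ⋊ W_J` -/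
def WJaff (J : Set D.X) : Subgroup D.Wt :=
  Subgroup.closure {w | ∃ α ∈ D.RJ J, ∃ k : ℤ, ∃ u : D.W0,
    D.IsReflOf α (u : AddAut D.X) ∧ w = D.trans (k • α) * SemidirectProduct.inr u}

/-- `J_aff`: the simple reflections of `(W_J)_aff`, i.e. its `ℓ_J`-length one elements -/
def Jaff (J : Set D.X) : Set D.Wt := {w | w ∈ D.WJaff J ∧ D.lenJ J w = 1}

/-- `Ω_J`: the `ℓ_J`-length zero elements of `W̃_J` -/
def isOmegaJ (J : Set D.X) (w : D.Wt) : Prop := D.inWtJ J w ∧ D.lenJ J w = 0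

/-- `w̃ ∈ W̃_J` is `J`-positive -/
def JposT (J : Set D.X) (w : D.Wt) : Prop :=
  D.inWtJ J w ∧ ∀ α ∈ D.Rplus, α ∉ D.RJ J → 0 ≤ D.pairing (D.tpart w) (D.coroot α)

/-- `λ ∈ X` is dominant -/
def dominant (lam : D.X) : Prop := ∀ α ∈ D.Rplus, 0 ≤ D.pairing lam (D.coroot α)

/-- `λ ∈ X⁺(J)`, i.e. `λ` is dominant and `J_λ = J` -/
def inXplusJ (J : Set D.X) (lam : D.X) : Prop :=
  D.dominant lam ∧ ∀ α ∈ D.F0, (D.pairing lam (D.coroot α) = 0 ↔ α ∈ J)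

/-- the length function of the finite Weyl group `W₀`, via inversions -/
def len0 (f : AddAut D.X) : ℕ := Set.ncard {α | α ∈ D.Rplus ∧ f α ∉ D.Rplus}

/-- `u` is a minimal length representative in `W_J u`, i.e. `u ∈ {}^J W₀` -/
def minJW0 (J : Set D.X) (f : AddAut D.X) : Prop :=
  f ∈ D.W0 ∧ ∀ g ∈ D.WJ0 J, D.len0 f ≤ D.len0 (g * f)

end BasedRootDatum

/-!
Write `w n` for the image of `u xⁿ` in `W̃`. As an element of `(W_J)_aff`, `π u` fixes `λ` and so
commutes with `t^λ`; hence `w (n + n₀) = t^λ * w n`. The length of `t^μ w` is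
`∑_{α ∈ R} (⟨μ, (wα)^∨⟩ + c_w α)₊` with `c_w` independent of `μ`, so for `μ = q λ` with
`q ≥ max |c_w|` each summand is additive in `q`, and the sum of the `⟨λ, (wα)^∨⟩₊` is `ℓ(t^λ)`.
Applying this to the finitely many residues of `n` modulo `n₀` gives the claim.
-/
lemma Int.toNat_add_one_mul_add {L C q : ℤ} (hC : |C| ≤ q) :
    ((q + 1) * L + C).toNat = (q * L + C).toNat + L.toNat := by
  rw [abs_le] at hC
  rw [add_one_mul]
  rcases lt_trichotomy L 0 with hL | rfl | hL
  · have : q * L ≤ -q := by nlinarith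
    omega
  · simp
  · have : q ≤ q * L := by nlinarith
    omega

namespace BasedRootDatum

variable (D : BasedRootDatum)

lemma mapsTo_R_of_mem_W0 {g : AddAut D.X} (hg : g ∈ D.W0) : Set.MapsTo g D.R D.R := by
  induction hg using Subgroup.closure_induction with
  | mem f hf =>
    obtain ⟨α, hα, hrefl⟩ := hf
    intro β hβ
    rw [hrefl]
    exact D.refl_mem α hα β hβ
  | one => exact Set.mapsTo_id _
  | mul f g _ _ hf hg => exact hf.comp hg
  | inv f _ hf =>
    -- an injective self-map of the finite set `R` is onto, so its inverse also preserves `R`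
    intro β hβ
    obtain ⟨α, hα, rfl⟩ :=
      ((D.R_fin.injOn_iff_bijOn_of_mapsTo hf).mp f.injective.injOn).surjOn hβ
    show f.symm (f α) ∈ D.R
    rwa [f.symm_apply_apply]

lemma bijOn_R_of_mem_W0 {g : AddAut D.X} (hg : g ∈ D.W0) : Set.BijOn g D.R D.R :=
  (D.R_fin.injOn_iff_bijOn_of_mapsTo (D.mapsTo_R_of_mem_W0 hg)).mp g.injective.injOn

lemma wact_mem_R (w : D.Wt) {α : D.X} (hα : α ∈ D.R) : D.wact w α ∈ D.R :=
  D.mapsTo_R_of_mem_W0 w.right.2 hα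

lemma sum_comp_wact {M : Type*} [AddCommMonoid M] (w : D.Wt) (f : D.X → M) :
    ∑ α ∈ D.R_fin.toFinset, f (D.wact w α) = ∑ α ∈ D.R_fin.toFinset, f α := by
  have hbij : Set.BijOn (D.wact w) D.R D.R := D.bijOn_R_of_mem_W0 w.right.2
  rw [← D.R_fin.coe_toFinset] at hbij
  exact Finset.sum_nbij _ (fun _ hα => hbij.mapsTo hα) hbij.injOn hbij.surjOn fun _ _ => rfl

lemma tpart_trans_mul (lam : D.X) (w : D.Wt) : D.tpart (D.trans lam * w) = lam + D.tpart w := rfl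

lemma wact_trans_mul (lam : D.X) (w : D.Wt) : D.wact (D.trans lam * w) = D.wact w := rfl

lemma trans_add (a b : D.X) : D.trans (a + b) = D.trans a * D.trans b :=
  map_mul SemidirectProduct.inl (Multiplicative.ofAdd a) (Multiplicative.ofAdd b)

lemma wact_one (α : D.X) : D.wact 1 α = α := rfl

lemma tpart_one : D.tpart 1 = 0 := rfl

lemma wact_eq_self_of_mem_WJaff {J : Set D.X} {lam : D.X}
    (hzero : ∀ α ∈ D.RJ J, D.pairing lam (D.coroot α) = 0) {w : D.Wt} (hw : w ∈ D.WJaff J) :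
    D.wact w lam = lam := by
  induction hw using Subgroup.closure_induction with
  | mem g hg =>
    obtain ⟨α, hα, k, f, hrefl, rfl⟩ := hg
    show (f : AddAut D.X) lam = lam
    rw [hrefl lam, hzero α hα, zero_smul, sub_zero]
  | one => rfl
  | mul a b _ _ ha hb =>
    show D.wact a (D.wact b lam) = lam
    rw [hb, ha]
  | inv a _ ha =>
    show (a.right : AddAut D.X).symm lam = lam
    rw [AddEquiv.symm_apply_eq]
    exact ha.symm

lemma commute_trans_of_wact_eq {w : D.Wt} {lam : D.X} (h : D.wact w lam = lam) :
    Commute w (D.trans lam) := by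
  refine SemidirectProduct.ext ?_ rfl
  show Multiplicative.ofAdd (D.tpart w + D.wact w lam) = Multiplicative.ofAdd (lam + D.tpart w)
  rw [h, add_comm]

def posInd (α : D.X) : ℤ := if α ∈ D.Rplus then 1 else 0

lemma posAff_and_not_posAff_affAct_iff (w : D.Wt) (α : D.X) (k : ℤ) :
    (D.posAff (α, k) ∧ ¬ D.posAff (D.affAct w (α, k))) ↔ α ∈ D.R ∧
      k ∈ Set.Ioc (-D.posInd α)
        (D.pairing (D.tpart w) (D.coroot (D.wact w α)) - D.posInd (D.wact w α)) := by
  by_cases hα : α ∈ D.R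
  · have hwα := D.wact_mem_R w hα
    by_cases h1 : α ∈ D.Rplus <;> by_cases h2 : D.wact w α ∈ D.Rplus <;>
      simp [posAff, affAct, posInd, hα, hwα, h1, h2] <;> omega
  · simp [posAff, hα]

lemma lenT_eq_sum (w : D.Wt) :
    D.lenT w = ∑ α ∈ D.R_fin.toFinset,
      (D.pairing (D.tpart w) (D.coroot (D.wact w α)) + D.posInd α
        - D.posInd (D.wact w α)).toNat := by
  set F := (D.R_fin.toFinset.sigma fun α => Finset.Ioc (-D.posInd α)
      (D.pairing (D.tpart w) (D.coroot (D.wact w α)) - D.posInd (D.wact w α))).map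
    (Equiv.sigmaEquivProd D.X ℤ).toEmbedding
  have hF : {a : D.X × ℤ | D.posAff a ∧ ¬ D.posAff (D.affAct w a)} = F := by
    ext ⟨α, k⟩
    simp [F, posAff_and_not_posAff_affAct_iff]
  rw [lenT, hF, Set.ncard_coe_finset, Finset.card_map, Finset.card_sigma]
  refine Finset.sum_congr rfl fun α _ => ?_
  rw [Int.card_Ioc]
  ring_nf

lemma lenT_one : D.lenT 1 = 0 := by
  simp [lenT_eq_sum, wact_one, tpart_one]

lemma lenT_trans_mul (lam : D.X) (w : D.Wt) :
    D.lenT (D.trans lam * w) = ∑ α ∈ D.R_fin.toFinset,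
      (D.pairing lam (D.coroot (D.wact w α)) + (D.pairing (D.tpart w) (D.coroot (D.wact w α))
        + D.posInd α - D.posInd (D.wact w α))).toNat := by
  rw [lenT_eq_sum, tpart_trans_mul, wact_trans_mul]
  simp only [map_add, AddMonoidHom.add_apply, add_sub_assoc, add_assoc]

lemma lenT_trans (lam : D.X) (w : D.Wt) :
    D.lenT (D.trans lam) =
      ∑ α ∈ D.R_fin.toFinset, (D.pairing lam (D.coroot (D.wact w α))).toNat := by
  rw [sum_comp_wact (f := fun α => (D.pairing lam (D.coroot α)).toNat), ← mul_one (D.trans lam),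
    lenT_trans_mul]
  simp [wact_one, tpart_one]

open Filter in
lemma eventually_lenT_trans_succ_nsmul_mul (lam : D.X) (w : D.Wt) :
    ∀ᶠ q : ℕ in atTop, D.lenT (D.trans ((q + 1) • lam) * w) =
      D.lenT (D.trans (q • lam) * w) + D.lenT (D.trans lam) := by
  set C : D.X → ℤ := fun α =>
    D.pairing (D.tpart w) (D.coroot (D.wact w α)) + D.posInd α - D.posInd (D.wact w α)
  have hbound : ∀ᶠ q : ℕ in atTop, ∀ α ∈ D.R_fin.toFinset, |C α| ≤ q :=
    (eventually_all_finset _).2 fun α _ => (eventually_ge_atTop (C α).natAbs).mono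
      fun q hq => by rw [Int.abs_eq_natAbs]; exact_mod_cast hq
  filter_upwards [hbound] with q hq
  rw [lenT_trans_mul, lenT_trans_mul, D.lenT_trans lam w, ← Finset.sum_add_distrib]
  refine Finset.sum_congr rfl fun α hα => ?_
  simp only [map_nsmul, AddMonoidHom.nsmul_apply, nsmul_eq_mul]
  push_cast
  exact Int.toNat_add_one_mul_add (hq α hα)

open Filter in
lemma eventually_lenT_add_of_periodic (lam : D.X) (w : ℕ → D.Wt) (p : ℕ)
    (hw : ∀ n, w (n + p) = D.trans lam * w n) :
    ∀ᶠ n in atTop, D.lenT (w (n + p)) = D.lenT (w n) + D.lenT (D.trans lam) := by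
  rcases Nat.eq_zero_or_pos p with rfl | hp
  · have : D.trans lam = 1 := right_eq_mul.mp (hw 0)
    simp [this, lenT_one]
  have hiter : ∀ q r, w (p * q + r) = D.trans (q • lam) * w r := by
    intro q r
    induction q with
    | zero => simp [trans]
    | succ q ih =>
      rw [mul_add_one, add_right_comm, hw, ih, ← mul_assoc, ← trans_add, succ_nsmul']
  have hdiv : Tendsto (· / p) atTop atTop :=
    tendsto_atTop_atTop.2 fun b => ⟨b * p, fun n hn => (Nat.le_div_iff_mul_le hp).2 hn⟩
  filter_upwards [hdiv.eventually (eventually_all.2 fun r : Fin p =>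
    D.eventually_lenT_trans_succ_nsmul_mul lam (w r))] with n hn
  have hn' : w n = D.trans ((n / p) • lam) * w (n % p) := by
    rw [← hiter, Nat.div_add_mod]
  rw [hw, hn', ← mul_assoc, ← trans_add, ← succ_nsmul']
  exact hn ⟨n % p, Nat.mod_lt n hp⟩

end BasedRootDatum

theorem len_u_xn_add_general (D : BasedRootDatum) (G : Type) [Group G]
    (π : G →* D.Wt)
    (J : Set D.X)
    (Γ : Set D.Wt) (hΓ : Γ ⊆ D.Jaff J)
    (x : G)
    (lam : D.X) (hlam : π (x ^ Nat.card D.W0) = D.trans lam)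
    (hzero : ∀ α ∈ D.RJ J, D.pairing lam (D.coroot α) = 0)
    (u : G) (hu : π u ∈ Subgroup.closure Γ) :
    ∃ N : ℕ, ∀ n ≥ N,
      D.lenT (π (u * x ^ (n + Nat.card D.W0))) =
        D.lenT (π (u * x ^ n)) + D.lenT (π (x ^ Nat.card D.W0)) := by
  have hΓ_le : Subgroup.closure Γ ≤ D.WJaff J := (Subgroup.closure_le _).2 fun _ hw => (hΓ hw).1
  have hu_comm : Commute (π u) (D.trans lam) :=
    D.commute_trans_of_wact_eq (D.wact_eq_self_of_mem_WJaff hzero (hΓ_le hu))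
  have hperiodic : ∀ n, π (u * x ^ (n + Nat.card D.W0)) = D.trans lam * π (u * x ^ n) := by
    intro n
    have hxn_comm : Commute (π (x ^ n)) (D.trans lam) := by
      rw [← hlam]
      exact (Commute.pow_pow_self x n _).map π
    have hcomm : Commute (π (u * x ^ n)) (D.trans lam) := by
      rw [map_mul]
      exact hu_comm.mul_left hxn_comm
    rw [pow_add, ← mul_assoc, map_mul, hlam, hcomm.eq]
  rw [hlam]
  exact Filter.eventually_atTop.1
    (D.eventually_lenT_add_of_periodic lam (fun n => π (u * x ^ n)) _ hperiodic)

/-- **Proposition 5.5(2) (He–Nie)**. Let `(J, Γ)` be a standard pair, `x ∈ Ω_J(1)` with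
`ν_x` dominant, `⟨ν_x, α^∨⟩ = 0` on `R_J` and `⟨ν_x, α^∨⟩ > 0` on `R⁺ ∖ R_J`, and
`u ∈ W_Γ(1)`. Then for all sufficiently large `n`,
`ℓ(u x^{n+n₀}) = ℓ(u xⁿ) + ℓ(x^{n₀})`, where `n₀ = #W₀`. -/
theorem len_u_xn_add (D : BasedRootDatum) (G : Type) [Group G]
    (π : G →* D.Wt) (π_surj : Function.Surjective π)
    (Z_fin : Finite π.ker) (Z_comm : ∀ z w : π.ker, z * w = w * z)
    (J : Set D.X) (hJ : J ⊆ D.F0)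
    (Γ : Set D.Wt) (hΓ : Γ ⊆ D.Jaff J) (hΓfin : Finite (Subgroup.closure Γ))
    (x : G) (hx : D.isOmegaJ J (π x))
    (lam : D.X) (hlam : π (x ^ Nat.card D.W0) = D.trans lam)
    (hdom : D.dominant lam)
    (hzero : ∀ α ∈ D.RJ J, D.pairing lam (D.coroot α) = 0)
    (hpos : ∀ α ∈ D.Rplus, α ∉ D.RJ J → 0 < D.pairing lam (D.coroot α))
    (u : G) (hu : π u ∈ Subgroup.closure Γ) :
    ∃ N : ℕ, ∀ n ≥ N,
      D.lenT (π (u * x ^ (n + Nat.card D.W0))) =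
        D.lenT (π (u * x ^ n)) + D.lenT (π (x ^ Nat.card D.W0)) :=
  len_u_xn_add_general D G π J Γ hΓ x lam hlam hzero u hu
end
end

section
/- Let k be an algebraically closed field, A a k-algebra, τ ∈ A, and ζ a finite linear combination (with coefficients in k) of isomorphism classes of finite-dimensional simple A-modules. Suppose there exists an invertible central element μ ∈ A such that Tr(τ μⁿ, ζ) = 0 for all sufficiently large n. Then Tr(τ, ζ) = 0. -/
open scoped Classical

noncomputable section

/-- Vandermonde-type lemma: if `∑ s in S, B s * s ^ m = 0` for all `m`, then
each coefficient `B s` vanishes (for `s ∈ S`). -/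
lemma aux_vandermonde {k : Type} [Field k] (S : Finset k) :
    ∀ B : k → k, (∀ m : ℕ, ∑ s ∈ S, B s * s ^ m = 0) → ∀ s ∈ S, B s = 0 := by
  induction S using Finset.induction_on with
  | empty => intro B h s hs; simp at hs
  | @insert t S ht ih =>
    intro B h
    have hS : ∀ s ∈ S, B s * (s - t) = 0 := by
      apply ih (fun s => B s * (s - t))
      intro m
      have key : ∑ s ∈ S, (B s * (s - t)) * s ^ m
          = ∑ s ∈ insert t S, (B s * s ^ (m + 1) - t * (B s * s ^ m)) := by
        rw [Finset.sum_insert ht]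
        have h0 : B t * t ^ (m + 1) - t * (B t * t ^ m) = 0 := by
          rw [pow_succ]; ring
        rw [h0, zero_add]
        apply Finset.sum_congr rfl
        intro s _
        rw [pow_succ]; ring
      rw [key, Finset.sum_sub_distrib, ← Finset.mul_sum, h (m + 1), h m, mul_zero,
        sub_zero]
    have hS' : ∀ s ∈ S, B s = 0 := by
      intro s hs
      have hst : s - t ≠ 0 := sub_ne_zero_of_ne (by rintro rfl; exact ht hs)
      exact (mul_eq_zero.mp (hS s hs)).resolve_right hst
    intro s hs
    rcases Finset.mem_insert.mp hs with rfl | hs'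
    · have h0 := h 0
      rw [Finset.sum_insert ht] at h0
      simp only [pow_zero, mul_one] at h0
      have : ∑ s ∈ S, B s = 0 := by
        apply Finset.sum_eq_zero
        intro x hx
        exact hS' x hx
      rw [this, add_zero] at h0
      exact h0
    · exact hS' s hs'

/-- **Lemma 7.2 (He–Nie)**. Let `k` be an algebraically closed field, `A` a `k`-algebra,
`τ ∈ A`, and `ζ = Σ_i a_i V_i` a finite `k`-linear combination of finite-dimensional
simple `A`-modules. If there is an invertible central element `μ ∈ A` such that
`Tr(τ μⁿ, ζ) = 0` for all sufficiently large `n`, then `Tr(τ, ζ) = 0`. -/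
theorem trace_central_power_vanishing {k : Type} [Field k] [IsAlgClosed k]
    {A : Type} [Ring A] [Algebra k A]
    (n : ℕ) (a : Fin n → k) (V : Fin n → Type)
    [∀ i, AddCommGroup (V i)] [∀ i, Module k (V i)] [∀ i, FiniteDimensional k (V i)]
    (ρ : ∀ i, A →ₐ[k] Module.End k (V i))
    (hsimple : ∀ i, ∀ U : Submodule k (V i),
      (∀ x : A, ∀ v ∈ U, (ρ i) x v ∈ U) → U = ⊥ ∨ U = ⊤)
    (hne : ∀ i, ∃ v : V i, v ≠ 0)
    (τ μ : A) (hμunit : IsUnit μ) (hμcentral : ∀ x : A, μ * x = x * μ)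
    (hvanish : ∃ N : ℕ, ∀ m ≥ N,
      ∑ i, a i * LinearMap.trace k (V i) ((ρ i) (τ * μ ^ m)) = 0) :
    ∑ i, a i * LinearMap.trace k (V i) ((ρ i) τ) = 0 := by
  obtain ⟨N, hN⟩ := hvanish
  -- `μ` acts on each simple module as a nonzero scalar `c i`
  have key : ∀ i, ∃ c : k, c ≠ 0 ∧ (ρ i) μ = c • (1 : Module.End k (V i)) := by
    intro i
    obtain ⟨v0, hv0⟩ := hne i
    haveI : Nontrivial (V i) := nontrivial_of_ne v0 0 hv0
    obtain ⟨c, hc⟩ := Module.End.exists_eigenvalue ((ρ i) μ)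
    -- the eigenspace is invariant under the `A`-action
    set E := Module.End.eigenspace ((ρ i) μ) c with hE
    have hinv : ∀ x : A, ∀ v ∈ E, (ρ i) x v ∈ E := by
      intro x v hv
      rw [hE, Module.End.mem_eigenspace_iff] at hv ⊢
      have hcomm : (ρ i) μ * (ρ i) x = (ρ i) x * (ρ i) μ := by
        rw [← map_mul, ← map_mul, hμcentral]
      calc (ρ i) μ ((ρ i) x v) = ((ρ i) μ * (ρ i) x) v := rfl
        _ = ((ρ i) x * (ρ i) μ) v := by rw [hcomm]
        _ = (ρ i) x ((ρ i) μ v) := rfl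
        _ = (ρ i) x (c • v) := by rw [hv]
        _ = c • (ρ i) x v := by rw [map_smul]
    have hEtop : E = ⊤ := by
      rcases hsimple i E hinv with hbot | htop
      · exact absurd hbot hc
      · exact htop
    have hsmul : (ρ i) μ = c • (1 : Module.End k (V i)) := by
      apply LinearMap.ext
      intro v
      have hvE : v ∈ E := hEtop ▸ Submodule.mem_top
      rw [hE, Module.End.mem_eigenspace_iff] at hvE
      simpa using hvE
    refine ⟨c, ?_, hsmul⟩
    -- `c ≠ 0` since `μ` is a unit
    intro hc0
    obtain ⟨u, hu⟩ := hμunit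
    have h1 : μ * ↑u⁻¹ = 1 := by rw [← hu]; exact u.mul_inv
    have h2 : (ρ i) μ ((ρ i) (↑u⁻¹ : A) v0) = v0 := by
      have := congrArg (ρ i) h1
      rw [map_mul, map_one] at this
      calc (ρ i) μ ((ρ i) (↑u⁻¹ : A) v0) = ((ρ i) μ * (ρ i) (↑u⁻¹ : A)) v0 := rfl
        _ = (1 : Module.End k (V i)) v0 := by rw [this]
        _ = v0 := rfl
    rw [hsmul, hc0] at h2
    simp at h2
    exact hv0 h2.symm
  choose c hc0 hcsmul using key
  -- traces of `τ * μ ^ m`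
  have trace_eq : ∀ i (m : ℕ), LinearMap.trace k (V i) ((ρ i) (τ * μ ^ m))
      = c i ^ m * LinearMap.trace k (V i) ((ρ i) τ) := by
    intro i m
    rw [map_mul, map_pow, hcsmul i, smul_pow, one_pow, mul_smul_comm, mul_one,
      map_smul, smul_eq_mul]
  set Tr : Fin n → k := fun i => LinearMap.trace k (V i) ((ρ i) τ) with hTr
  set S : Finset k := Finset.image c Finset.univ with hSdef
  set B : k → k := fun s =>
    (∑ i ∈ Finset.univ.filter (fun i => c i = s), a i * Tr i) * s ^ N with hBdef
  have hmaps : ∀ i ∈ (Finset.univ : Finset (Fin n)), c i ∈ S := by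
    intro i _; exact Finset.mem_image_of_mem c (Finset.mem_univ i)
  have hB0 : ∀ s ∈ S, B s = 0 := by
    apply aux_vandermonde S B
    intro m
    have : ∑ s ∈ S, B s * s ^ m
        = ∑ i, a i * LinearMap.trace k (V i) ((ρ i) (τ * μ ^ (N + m))) := by
      rw [← Finset.sum_fiberwise_of_maps_to hmaps
        (fun i => a i * LinearMap.trace k (V i) ((ρ i) (τ * μ ^ (N + m))))]
      apply Finset.sum_congr rfl
      intro s _
      rw [hBdef]
      simp only
      rw [Finset.sum_mul, Finset.sum_mul]
      apply Finset.sum_congr rfl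
      intro i hi
      have hcis : c i = s := (Finset.mem_filter.mp hi).2
      rw [trace_eq i (N + m), hcis, pow_add]
      ring
    rw [this]
    exact hN (N + m) (Nat.le_add_right N m)
  have hfiber : ∀ s ∈ S, ∑ i ∈ Finset.univ.filter (fun i => c i = s), a i * Tr i = 0 := by
    intro s hs
    have hs0 : s ≠ 0 := by
      rw [hSdef] at hs
      obtain ⟨i, _, rfl⟩ := Finset.mem_image.mp hs
      exact hc0 i
    have := hB0 s hs
    rw [hBdef] at this
    simp only at this
    rcases mul_eq_zero.mp this with h | h
    · exact h
    · exact absurd h (pow_ne_zero N hs0)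
  calc ∑ i, a i * LinearMap.trace k (V i) ((ρ i) τ)
      = ∑ s ∈ S, ∑ i ∈ Finset.univ.filter (fun i => c i = s), a i * Tr i :=
        (Finset.sum_fiberwise_of_maps_to hmaps (fun i => a i * Tr i)).symm
    _ = 0 := Finset.sum_eq_zero hfiber
end
end
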